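/- For every n ≥ 0, H_n(q) · Σ_{k=-n}^n (-q)^{k^2}, expanded as a power series in q, agrees with the power series expansion of the rational function Σ_{k=0}^{n} 2(-q^{n+1})^k/(1+q^k) H_k in all degrees ≤ n. -/
import Mathlib


open Finset

/-- The formal variable q as a rational function. -/
noncomputable def q : RatFunc ℚ := RatFunc.X

/-- H n q = prod_{j=1}^n (1+q^j)/(1-q^j). -/
noncomputable def H (n : ℕ) : RatFunc ℚ := ∏ j ∈ Finset.Icc 1 n, (1 + q ^ j) / (1 - q ^ j)

lemma one_add_q_pow_ne (k : ℕ) : (1 + q ^ k : RatFunc ℚ) ≠ 0 := by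
  have h : (1 + q ^ k : RatFunc ℚ)
      = algebraMap (Polynomial ℚ) (RatFunc ℚ) (1 + Polynomial.X ^ k) := by
    simp [q, map_add, map_pow, RatFunc.algebraMap_X]
  rw [h]
  apply RatFunc.algebraMap_ne_zero
  intro hc
  have h0 := congrArg (Polynomial.eval 0) hc
  rcases Nat.eq_zero_or_pos k with hk | hk
  · simp [hk] at h0
  · simp [zero_pow hk.ne'] at h0

lemma one_sub_q_pow_ne (k : ℕ) (hk : k ≠ 0) : (1 - q ^ k : RatFunc ℚ) ≠ 0 := by
  have h : (1 - q ^ k : RatFunc ℚ)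
      = algebraMap (Polynomial ℚ) (RatFunc ℚ) (1 - Polynomial.X ^ k) := by
    simp [q, map_sub, map_pow, RatFunc.algebraMap_X]
  rw [h]
  apply RatFunc.algebraMap_ne_zero
  intro hc
  have h0 := congrArg (Polynomial.eval 0) hc
  simp [zero_pow hk] at h0

lemma Hsucc (n : ℕ) : H (n + 1) = H n * ((1 + q ^ (n + 1)) / (1 - q ^ (n + 1))) := by
  rw [H, H, Finset.prod_Icc_succ_top (Nat.le_add_left 1 n)]

lemma negone_pow_sq (m : ℕ) : ((-1 : RatFunc ℚ)) ^ (m ^ 2) = (-1 : RatFunc ℚ) ^ m := by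
  rcases Nat.even_or_odd m with h | h
  · rw [(Nat.even_pow.mpr ⟨h, two_ne_zero⟩).neg_one_pow, h.neg_one_pow]
  · rw [(h.pow).neg_one_pow, h.neg_one_pow]

/-- Auxiliary summand. -/
noncomputable def Fn (n k : ℕ) : RatFunc ℚ :=
  2 * (-1) ^ k * q ^ ((n + 1) * k) / (1 + q ^ k) * H k

lemma H0 : H 0 = 1 := by
  rw [H, show Finset.Icc 1 0 = (∅ : Finset ℕ) from Finset.Icc_eq_empty (by omega)]
  exact Finset.prod_empty

lemma Gs_succ (n : ℕ) :
    (∑ k ∈ Finset.Icc (-((n : ℤ) + 1)) ((n : ℤ) + 1), (-q) ^ (k ^ 2))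
      = (∑ k ∈ Finset.Icc (-(n : ℤ)) (n : ℤ), (-q) ^ (k ^ 2))
        + 2 * (-1) ^ (n + 1) * q ^ ((n + 1) ^ 2) := by
  have hset : Finset.Icc (-((n : ℤ) + 1)) ((n : ℤ) + 1)
      = insert ((n : ℤ) + 1) (insert (-((n : ℤ) + 1)) (Finset.Icc (-(n : ℤ)) (n : ℤ))) := by
    ext x
    simp only [Finset.mem_Icc, Finset.mem_insert]
    omega
  have h1 : ((n : ℤ) + 1) ∉ insert (-((n : ℤ) + 1)) (Finset.Icc (-(n : ℤ)) (n : ℤ)) := by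
    simp only [Finset.mem_insert, Finset.mem_Icc]
    omega
  have h2 : (-((n : ℤ) + 1)) ∉ Finset.Icc (-(n : ℤ)) (n : ℤ) := by
    simp only [Finset.mem_Icc]
    omega
  rw [hset, Finset.sum_insert h1, Finset.sum_insert h2]
  have e1 : (-((n : ℤ) + 1)) ^ 2 = ((n : ℤ) + 1) ^ 2 := by ring
  have e2 : ((n : ℤ) + 1) ^ 2 = (((n + 1) ^ 2 : ℕ) : ℤ) := by push_cast; ring
  have e3 : (-q) ^ ((((n + 1) ^ 2 : ℕ)) : ℤ) = (-q) ^ ((n + 1) ^ 2 : ℕ) := zpow_natCast _ _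
  rw [e1, e2, e3, neg_pow, negone_pow_sq]
  ring

lemma Fn0 (n : ℕ) : Fn n 0 = 1 := by
  have h2 := one_add_q_pow_ne 0
  rw [Fn, H0, mul_one, div_eq_iff h2]
  norm_num

lemma tele (n j : ℕ) :
    ∑ k ∈ Finset.range (j + 1), Fn (n + 1) k
      = (1 + q ^ (n + 1)) / (1 - q ^ (n + 1)) * ∑ k ∈ Finset.range (j + 1), Fn n k
        - 2 * (-1) ^ j * H j * q ^ ((n + 1) * (j + 1)) / (1 - q ^ (n + 1)) := by
  have hSn := one_sub_q_pow_ne (n + 1) (Nat.succ_ne_zero n)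
  induction j with
  | zero =>
    norm_num [Fn0, H0]
    field_simp
    ring
  | succ j ih =>
    have hA := one_add_q_pow_ne (j + 1)
    have hS := one_sub_q_pow_ne (j + 1) (Nat.succ_ne_zero j)
    rw [Finset.sum_range_succ, Finset.sum_range_succ (f := Fn n), ih]
    simp only [Fn, Hsucc j]
    field_simp
    ring

lemma main_identity (n : ℕ) :
    H n * ∑ k ∈ Finset.Icc (-(n : ℤ)) (n : ℤ), (-q) ^ (k ^ 2)
      = ∑ k ∈ Finset.range (n + 1), Fn n k := by
  induction n with
  | zero =>
    norm_num [Fn0, H0]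
  | succ n ih =>
    have hSn := one_sub_q_pow_ne (n + 1) (Nat.succ_ne_zero n)
    have hAn := one_add_q_pow_ne (n + 1)
    have hcast : ((n + 1 : ℕ) : ℤ) = (n : ℤ) + 1 := by push_cast; ring
    rw [Finset.sum_range_succ, tele n n, ← ih, hcast, Gs_succ n]
    rw [Hsucc n]
    simp only [Fn, Hsucc n]
    field_simp
    ring

theorem identity_b_truncated (n m : ℕ) (hm : m ≤ n) :
    ((H n * ∑ k ∈ Finset.Icc (-(n : ℤ)) (n : ℤ), (-q) ^ (k ^ 2)
        : RatFunc ℚ) : LaurentSeries ℚ).coeff (m : ℤ)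
      = ((∑ k ∈ Finset.range (n + 1), 2 * (-q ^ (n + 1)) ^ k / (1 + q ^ k) * H k
        : RatFunc ℚ) : LaurentSeries ℚ).coeff (m : ℤ) := by
  have hsum : (∑ k ∈ Finset.range (n + 1), 2 * (-q ^ (n + 1)) ^ k / (1 + q ^ k) * H k
      : RatFunc ℚ) = ∑ k ∈ Finset.range (n + 1), Fn n k := by
    refine Finset.sum_congr rfl fun k _ => ?_
    rw [Fn, neg_pow, ← pow_mul]
    ring
  rw [hsum, main_identity n]
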